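/- arXiv:2305.08841 — 3 statements merged into one kernel-verified Lean document; each statement's English description precedes it below -/
import Mathlib

section
/- Let A be a finite nonempty set, Q, Q' : A → ℝ, and let π, π' be the softmax distributions induced by Q and Q'. Then for every a ∈ A, π(a)/π'(a) ≤ exp(2 * ‖Q - Q'‖_∞). -/
open Real Finset

/-! Each weight `exp (Q b)` is within a factor `exp M` of `exp (Q' b)`, where `M = ‖Q - Q'‖_∞`.
This costs one factor `exp M` in the numerator of `π a / π' a` and another in the ratio of the
two normalizing sums. -/

noncomputable def softmax {ι : Type*} [Fintype ι] (Q : ι → ℝ) (a : ι) : ℝ :=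
  exp (Q a) / ∑ i, exp (Q i)

theorem exp_le_exp_mul_exp {x y c : ℝ} (h : x ≤ y + c) : exp x ≤ exp c * exp y := by
  rw [← exp_add]
  exact exp_le_exp.2 (by linarith)

theorem sum_exp_le_exp_mul_sum_exp {ι : Type*} (s : Finset ι) {f g : ι → ℝ} {c : ℝ}
    (h : ∀ i ∈ s, f i ≤ g i + c) : ∑ i ∈ s, exp (f i) ≤ exp c * ∑ i ∈ s, exp (g i) := by
  rw [mul_sum]
  exact sum_le_sum fun i hi => exp_le_exp_mul_exp (h i hi)

theorem softmax_div_softmax_le {ι : Type*} [Fintype ι] {Q Q' : ι → ℝ} {M : ℝ}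
    (h : ∀ i, |Q i - Q' i| ≤ M) (a : ι) : softmax Q a / softmax Q' a ≤ exp (2 * M) := by
  have sum_exp_pos (f : ι → ℝ) : 0 < ∑ i, exp (f i) :=
    sum_pos (fun i _ => exp_pos (f i)) ⟨a, mem_univ a⟩
  have hnum : exp (Q a) ≤ exp M * exp (Q' a) :=
    exp_le_exp_mul_exp (by linarith [(abs_le.1 (h a)).2])
  have hden : ∑ i, exp (Q' i) ≤ exp M * ∑ i, exp (Q i) :=
    sum_exp_le_exp_mul_sum_exp _ fun i _ => by linarith [(abs_le.1 (h i)).1]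
  unfold softmax
  rw [div_div_div_eq, div_le_iff₀ (mul_pos (sum_exp_pos Q) (exp_pos _))]
  calc exp (Q a) * ∑ i, exp (Q' i)
      ≤ (exp M * exp (Q' a)) * (exp M * ∑ i, exp (Q i)) :=
        mul_le_mul hnum hden (sum_exp_pos Q').le (by positivity)
    _ = exp (2 * M) * ((∑ i, exp (Q i)) * exp (Q' a)) := by
        rw [two_mul, exp_add]; ring

theorem softmax_ratio_bound_general {A : Type*} [Fintype A] (Q Q' : A → ℝ) (a : A) :
    (Real.exp (Q a) / ∑ a', Real.exp (Q a')) /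
      (Real.exp (Q' a) / ∑ a', Real.exp (Q' a')) ≤
      Real.exp (2 * ⨆ a', |Q a' - Q' a'|) :=
  softmax_div_softmax_le (le_ciSup (Finite.bddAbove_range fun b => |Q b - Q' b|)) a

theorem softmax_ratio_bound {A : Type*} [Fintype A] [Nonempty A] (Q Q' : A → ℝ) (a : A) :
    (Real.exp (Q a) / ∑ a', Real.exp (Q a')) /
      (Real.exp (Q' a) / ∑ a', Real.exp (Q' a')) ≤
      Real.exp (2 * ⨆ a', |Q a' - Q' a'|) :=
  softmax_ratio_bound_general Q Q' a
end

section
/- Let A be a finite nonempty set, α > 0, H > 0, and Q : A → ℝ with 0 ≤ Q(a) ≤ H for all a. Let μ, π be probability distributions on A with π strictly positive, and let π' be the exponential-weights update π'(a) ∝ π(a) exp(α Q(a)). Then Σ_a Q(a) * (μ(a) - π(a)) ≤ α*H²/2 + (KL(μ ‖ π) - KL(μ ‖ π'))/α. -/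
/-!
The KL terms telescope: `KL(μ ‖ π) - KL(μ ‖ π') = α 𝔼_μ Q - log Z`, where
`Z = 𝔼_π exp (α Q)` is the normaliser of the update. Hoeffding's lemma for `Q ∈ [0, H]` bounds
`log Z ≤ α 𝔼_π Q + α² H² / 8`, and dividing by `α` gives the claim.
-/

open Finset MeasureTheory ProbabilityTheory

section ExpWeights

open Real

variable {A : Type*} [Fintype A]

noncomputable def expWeights (p Q : A → ℝ) (t : ℝ) (a : A) : ℝ :=
  p a * exp (t * Q a) / ∑ b, p b * exp (t * Q b)

lemma integral_sum_smul_dirac [MeasurableSpace A] [MeasurableSingletonClass A] {p : A → ℝ}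
    (hp : ∀ a, 0 ≤ p a) (f : A → ℝ) :
    ∫ a, f a ∂(∑ a, ENNReal.ofReal (p a) • Measure.dirac a) = ∑ a, p a * f a := by
  rw [integral_finsetSum_measure fun a _ => (integrable_dirac (by simp)).smul_measure (by simp)]
  simp [integral_smul_measure, ENNReal.toReal_ofReal (hp _)]

/-- Hoeffding's lemma, for the measure `∑ a, p a • δ a`. -/
lemma log_sum_mul_exp_le_of_mem_Icc {p : A → ℝ} (hp : ∀ a, 0 ≤ p a) (hpsum : ∑ a, p a = 1)
    {f : A → ℝ} {lo hi : ℝ} (hf : ∀ a, f a ∈ Set.Icc lo hi) (t : ℝ) :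
    log (∑ a, p a * exp (t * f a)) ≤ t * ∑ a, p a * f a + (hi - lo) ^ 2 * t ^ 2 / 8 := by
  let _ : MeasurableSpace A := ⊤
  set ν : Measure A := ∑ a, ENNReal.ofReal (p a) • Measure.dirac a
  have hν : ∀ g : A → ℝ, ∫ a, g a ∂ν = ∑ a, p a * g a := integral_sum_smul_dirac hp
  have : IsProbabilityMeasure ν :=
    ⟨by simp [ν, ← ENNReal.ofReal_sum_of_nonneg fun a _ => hp a, hpsum]⟩
  have hoeffding := (hasSubgaussianMGF_of_mem_Icc (μ := ν) (X := f)
    Measurable.of_discrete.aemeasurable (ae_of_all _ hf)).mgf_le t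
  have hZ : ∑ a, p a * exp (t * f a) =
      exp (t * ∑ a, p a * f a) * mgf (fun a => f a - ν[f]) ν t := by
    simp only [mgf, hν, mul_sub, exp_sub, mul_sum]
    refine sum_congr rfl fun a _ => ?_
    field_simp
  have hmgf_pos : 0 < mgf (fun a => f a - ν[f]) ν t := mgf_pos Integrable.of_finite
  have hlog_mgf := (log_le_log hmgf_pos hoeffding).trans_eq (log_exp _)
  have hc : (((‖hi - lo‖₊ / 2) ^ 2 : NNReal) : ℝ) = (hi - lo) ^ 2 / 4 := by
    simp only [NNReal.coe_pow, NNReal.coe_div, coe_nnnorm, norm_eq_abs, div_pow, sq_abs,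
      NNReal.coe_ofNat]
    norm_num
  rw [hc] at hlog_mgf
  rw [hZ, log_mul (exp_pos _).ne' hmgf_pos.ne', log_exp]
  linarith

lemma sum_mul_log_div_sub_sum_mul_log_div {μ p q : A → ℝ} (hp : ∀ a, p a ≠ 0)
    (hq : ∀ a, q a ≠ 0) :
    ∑ a, μ a * log (μ a / p a) - ∑ a, μ a * log (μ a / q a) = ∑ a, μ a * log (q a / p a) := by
  rw [← sum_sub_distrib]
  refine sum_congr rfl fun a _ => ?_
  rcases eq_or_ne (μ a) 0 with hμ | hμ
  · simp [hμ]
  · rw [← mul_sub, ← log_div (div_ne_zero hμ (hp a)) (div_ne_zero hμ (hq a))]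
    field_simp

variable [Nonempty A]

lemma sum_mul_exp_pos {p : A → ℝ} (hp : ∀ a, 0 < p a) (Q : A → ℝ) (t : ℝ) :
    0 < ∑ a, p a * exp (t * Q a) :=
  sum_pos (fun a _ => mul_pos (hp a) (exp_pos _)) univ_nonempty

lemma expWeights_pos {p : A → ℝ} (hp : ∀ a, 0 < p a) (Q : A → ℝ) (t : ℝ) (a : A) :
    0 < expWeights p Q t a :=
  div_pos (mul_pos (hp a) (exp_pos _)) (sum_mul_exp_pos hp Q t)

lemma sum_mul_log_expWeights_div {μ p : A → ℝ} (hμsum : ∑ a, μ a = 1) (hp : ∀ a, 0 < p a)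
    (Q : A → ℝ) (t : ℝ) :
    ∑ a, μ a * log (expWeights p Q t a / p a) =
      t * ∑ a, μ a * Q a - log (∑ a, p a * exp (t * Q a)) := by
  have hlog : ∀ a, log (expWeights p Q t a / p a) =
      t * Q a - log (∑ b, p b * exp (t * Q b)) := fun a => by
    have hZ := (sum_mul_exp_pos hp Q t).ne'
    have hratio : expWeights p Q t a / p a = exp (t * Q a) / ∑ b, p b * exp (t * Q b) := by
      rw [expWeights]
      field_simp [(hp a).ne']
    rw [hratio, log_div (exp_pos _).ne' hZ, log_exp]
  simp only [hlog, mul_sub, sum_sub_distrib, ← sum_mul, hμsum, one_mul, mul_left_comm (μ _) t,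
    ← mul_sum]

end ExpWeights

theorem mirror_descent_one_step_general {A : Type*} [Fintype A] [Nonempty A]
    (α H : ℝ) (hα : 0 < α)
    (Q : A → ℝ) (hQ : ∀ a, 0 ≤ Q a ∧ Q a ≤ H)
    (μ π : A → ℝ) (hμsum : ∑ a, μ a = 1)
    (hπpos : ∀ a, 0 < π a) (hπsum : ∑ a, π a = 1)
    (π' : A → ℝ)
    (hπ' : ∀ a, π' a = π a * Real.exp (α * Q a) / ∑ a', π a' * Real.exp (α * Q a')) :
    ∑ a, Q a * (μ a - π a) ≤ α * H ^ 2 / 2 +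
      ((∑ a, μ a * Real.log (μ a / π a)) - ∑ a, μ a * Real.log (μ a / π' a)) / α := by
  obtain rfl : π' = expWeights π Q α := funext hπ'
  have hlogZ := log_sum_mul_exp_le_of_mem_Icc (fun a => (hπpos a).le) hπsum hQ α
  rw [sum_mul_log_div_sub_sum_mul_log_div (fun a => (hπpos a).ne')
      (fun a => (expWeights_pos hπpos Q α a).ne'), sum_mul_log_expWeights_div hμsum hπpos,
    sub_div, mul_div_cancel_left₀ _ hα.ne']
  have hgap : ∑ a, Q a * (μ a - π a) = ∑ a, μ a * Q a - ∑ a, π a * Q a := by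
    rw [← sum_sub_distrib]
    exact sum_congr rfl fun a _ => by ring
  have hlogZ_div : Real.log (∑ a, π a * Real.exp (α * Q a)) / α ≤
      ∑ a, π a * Q a + α * H ^ 2 / 2 := by
    rw [div_le_iff₀ hα]
    nlinarith [sq_nonneg (α * H)]
  linarith

theorem mirror_descent_one_step {A : Type*} [Fintype A] [Nonempty A]
    (α H : ℝ) (hα : 0 < α) (hH : 0 < H)
    (Q : A → ℝ) (hQ : ∀ a, 0 ≤ Q a ∧ Q a ≤ H)
    (μ π : A → ℝ) (hμnonneg : ∀ a, 0 ≤ μ a) (hμsum : ∑ a, μ a = 1)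
    (hπpos : ∀ a, 0 < π a) (hπsum : ∑ a, π a = 1)
    (π' : A → ℝ)
    (hπ' : ∀ a, π' a = π a * Real.exp (α * Q a) / ∑ a', π a' * Real.exp (α * Q a')) :
    ∑ a, Q a * (μ a - π a) ≤ α * H ^ 2 / 2 +
      ((∑ a, μ a * Real.log (μ a / π a)) - ∑ a, μ a * Real.log (μ a / π' a)) / α :=
  mirror_descent_one_step_general α H hα Q hQ μ π hμsum hπpos hπsum π' hπ'
end

section
/- Let φ_1, …, φ_K ∈ ℝ^d with ‖φ_k‖_2 ≤ 1 and λ > 0. Define Λ_k = λ I_d + Σ_{τ=1}^{k-1} φ_τ φ_τᵀ. Then Σ_{k=1}^K sqrt(φ_kᵀ Λ_k^{-1} φ_k) ≤ sqrt(2 d K log((K+λ)/λ)), provided λ ≥ 1. -/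
/-!
Write `x_k = φ_kᵀ Λ_k⁻¹ φ_k`. Since `Λ_k ⪰ λ I`, `x_k ≤ ‖φ_k‖² / λ ≤ 1`, so `x_k ≤ 2 log (1 + x_k)`.
By the matrix determinant lemma `det Λ_{k+1} = det Λ_k · (1 + x_k)`, so these logarithms
telescope to `log det Λ_K - log det (λ I) ≤ d log ((K + λ) / λ)`, every eigenvalue of `Λ_K` being
at most `λ + K`. Cauchy–Schwarz turns the bound on `∑ x_k` into one on `∑ √x_k`.
-/

open Matrix Finset

namespace Matrix

variable {n : Type*} [Fintype n]

theorem dotProduct_sq_le_dotProduct_self_mul (u v : n → ℝ) :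
    (u ⬝ᵥ v) ^ 2 ≤ (u ⬝ᵥ u) * (v ⬝ᵥ v) := by
  simpa only [dotProduct, ← sq] using sum_mul_sq_le_sq_mul_sq univ u v

theorem dotProduct_self_nonneg (v : n → ℝ) : 0 ≤ v ⬝ᵥ v := by
  simpa using dotProduct_star_self_nonneg v

variable [DecidableEq n]

theorem det_add_vecMulVec {α : Type*} [CommRing α] {A : Matrix n n α} (hA : IsUnit A.det)
    (u v : n → α) : (A + vecMulVec u v).det = A.det * (1 + v ⬝ᵥ A⁻¹ *ᵥ u) := by
  rw [vecMulVec_eq Unit, det_add_replicateCol_mul_replicateRow hA, Matrix.mul_assoc,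
    ← replicateCol_mulVec, det_unique (n := Unit)]
  simp

theorem IsHermitian.eigenvalues_le {A : Matrix n n ℝ} (hA : A.IsHermitian) {c : ℝ}
    (h : ∀ v, v ⬝ᵥ A *ᵥ v ≤ c * (v ⬝ᵥ v)) (i : n) : hA.eigenvalues i ≤ c := by
  set v : n → ℝ := ⇑(hA.eigenvectorBasis i)
  have hv : 0 < v ⬝ᵥ v := by
    simpa using dotProduct_star_self_pos_iff.mpr
      ((WithLp.ofLp_injective 2).ne (hA.eigenvectorBasis.orthonormal.ne_zero i))
  have := h v
  rw [hA.mulVec_eigenvectorBasis, dotProduct_smul, smul_eq_mul] at this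
  exact le_of_mul_le_mul_right this hv

theorem PosSemidef.det_le_pow {A : Matrix n n ℝ} (hA : A.PosSemidef) {c : ℝ}
    (h : ∀ v, v ⬝ᵥ A *ᵥ v ≤ c * (v ⬝ᵥ v)) : A.det ≤ c ^ Fintype.card n := by
  calc A.det = ∏ i, hA.isHermitian.eigenvalues i := hA.isHermitian.det_eq_prod_eigenvalues
    _ ≤ ∏ _i : n, c :=
      prod_le_prod (fun i _ => hA.eigenvalues_nonneg i)
        fun i _ => hA.isHermitian.eigenvalues_le h i
    _ = c ^ Fintype.card n := prod_const c

theorem dotProduct_inv_mulVec_le {A : Matrix n n ℝ} {c : ℝ} (hc : 0 < c)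
    (h : ∀ v, c * (v ⬝ᵥ v) ≤ v ⬝ᵥ A *ᵥ v) (u : n → ℝ) :
    u ⬝ᵥ A⁻¹ *ᵥ u ≤ (u ⬝ᵥ u) / c := by
  by_cases hA : IsUnit A.det
  · set y := A⁻¹ *ᵥ u
    have hAy : A *ᵥ y = u := by
      rw [mulVec_mulVec, mul_nonsing_inv _ hA, one_mulVec]
    have hlow : c * (y ⬝ᵥ y) ≤ u ⬝ᵥ y := by
      simpa [hAy, dotProduct_comm] using h y
    have hcs := dotProduct_sq_le_dotProduct_self_mul u y
    rw [le_div_iff₀ hc]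
    nlinarith [mul_le_mul_of_nonneg_left hlow (dotProduct_self_nonneg u),
      mul_le_mul_of_nonneg_left hcs hc.le, dotProduct_self_nonneg u, dotProduct_self_nonneg y]
  · rw [nonsing_inv_apply_not_isUnit _ hA, zero_mulVec, dotProduct_zero]
    exact div_nonneg (dotProduct_self_nonneg u) hc.le

end Matrix

theorem Real.le_two_mul_log_one_add {x : ℝ} (h0 : 0 ≤ x) (h1 : x ≤ 1) :
    x ≤ 2 * Real.log (1 + x) := by
  have hlog := Real.one_sub_inv_le_log_of_pos (by linarith : 0 < 1 + x)
  have hinv : (1 + x)⁻¹ ≤ 1 - x / 2 := by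
    rw [inv_le_iff_one_le_mul₀ (by linarith)]
    nlinarith
  linarith

section RegularizedGram

variable {n : Type*} [DecidableEq n] (lam : ℝ) (φ : ℕ → n → ℝ)

noncomputable def regularizedGram (k : ℕ) : Matrix n n ℝ :=
  lam • 1 + ∑ τ ∈ range k, vecMulVec (φ τ) (φ τ)

theorem regularizedGram_succ (k : ℕ) :
    regularizedGram lam φ (k + 1) = regularizedGram lam φ k + vecMulVec (φ k) (φ k) := by
  simp only [regularizedGram, sum_range_succ, add_assoc]

variable [Fintype n]

theorem det_regularizedGram_zero : (regularizedGram lam φ 0).det = lam ^ Fintype.card n := by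
  simp [regularizedGram]

theorem dotProduct_regularizedGram_mulVec (k : ℕ) (v : n → ℝ) :
    v ⬝ᵥ regularizedGram lam φ k *ᵥ v = lam * (v ⬝ᵥ v) + ∑ τ ∈ range k, (φ τ ⬝ᵥ v) ^ 2 := by
  simp only [regularizedGram, add_mulVec, smul_mulVec, one_mulVec, dotProduct_add,
    dotProduct_smul, smul_eq_mul, Matrix.sum_mulVec, dotProduct_sum, vecMulVec_mulVec]
  simp [dotProduct_comm v, sq]

variable {lam}

theorem posDef_regularizedGram (hlam : 0 < lam) (k : ℕ) : (regularizedGram lam φ k).PosDef := by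
  refine (PosDef.one.smul hlam).add_posSemidef (posSemidef_sum _ fun τ _ => ?_)
  simpa using posSemidef_vecMulVec_self_star (φ τ)

theorem det_regularizedGram_succ (hlam : 0 < lam) (k : ℕ) :
    (regularizedGram lam φ (k + 1)).det =
      (regularizedGram lam φ k).det * (1 + φ k ⬝ᵥ (regularizedGram lam φ k)⁻¹ *ᵥ φ k) := by
  rw [regularizedGram_succ, det_add_vecMulVec (posDef_regularizedGram φ hlam k).det_pos.ne'.isUnit]

end RegularizedGram

section Potential

variable {n : Type*} [Fintype n] [DecidableEq n] {lam : ℝ} {φ : ℕ → n → ℝ}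

theorem dotProduct_inv_regularizedGram_nonneg (hlam : 0 < lam) (k : ℕ) :
    0 ≤ φ k ⬝ᵥ (regularizedGram lam φ k)⁻¹ *ᵥ φ k := by
  simpa using (posDef_regularizedGram φ hlam k).inv.posSemidef.dotProduct_mulVec_nonneg (φ k)

theorem dotProduct_inv_regularizedGram_le (hlam : 0 < lam) (k : ℕ) :
    φ k ⬝ᵥ (regularizedGram lam φ k)⁻¹ *ᵥ φ k ≤ (φ k ⬝ᵥ φ k) / lam :=
  dotProduct_inv_mulVec_le hlam (fun v => by
    rw [dotProduct_regularizedGram_mulVec]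
    exact le_add_of_nonneg_right (sum_nonneg fun τ _ => sq_nonneg _)) (φ k)

theorem det_regularizedGram_le (hlam : 0 < lam) (hφ : ∀ k, φ k ⬝ᵥ φ k ≤ 1) (K : ℕ) :
    (regularizedGram lam φ K).det ≤ (lam + K) ^ Fintype.card n := by
  refine (posDef_regularizedGram φ hlam K).posSemidef.det_le_pow fun v => ?_
  have hterm (τ : ℕ) : (φ τ ⬝ᵥ v) ^ 2 ≤ v ⬝ᵥ v :=
    (dotProduct_sq_le_dotProduct_self_mul _ _).trans
      (mul_le_of_le_one_left (dotProduct_self_nonneg v) (hφ τ))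
  calc v ⬝ᵥ regularizedGram lam φ K *ᵥ v
      = lam * (v ⬝ᵥ v) + ∑ τ ∈ range K, (φ τ ⬝ᵥ v) ^ 2 := dotProduct_regularizedGram_mulVec ..
    _ ≤ lam * (v ⬝ᵥ v) + ∑ τ ∈ range K, v ⬝ᵥ v := by gcongr with τ; exact hterm τ
    _ = (lam + K) * (v ⬝ᵥ v) := by rw [sum_const, card_range, nsmul_eq_mul]; ring

theorem sum_log_one_add_dotProduct_inv_regularizedGram (hlam : 0 < lam) (K : ℕ) :
    ∑ k ∈ range K, Real.log (1 + φ k ⬝ᵥ (regularizedGram lam φ k)⁻¹ *ᵥ φ k) =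
      Real.log (regularizedGram lam φ K).det - Real.log (regularizedGram lam φ 0).det := by
  rw [← sum_range_sub fun k => Real.log (regularizedGram lam φ k).det]
  refine sum_congr rfl fun k _ => ?_
  have hdet := (posDef_regularizedGram φ hlam k).det_pos
  have hx := dotProduct_inv_regularizedGram_nonneg (φ := φ) hlam k
  rw [det_regularizedGram_succ φ hlam, Real.log_mul hdet.ne' (by positivity)]
  ring

/-- The elliptical potential lemma. -/
theorem sum_dotProduct_inv_regularizedGram_le (hlam : 1 ≤ lam) (hφ : ∀ k, φ k ⬝ᵥ φ k ≤ 1)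
    (K : ℕ) :
    ∑ k ∈ range K, φ k ⬝ᵥ (regularizedGram lam φ k)⁻¹ *ᵥ φ k ≤
      2 * Fintype.card n * Real.log ((K + lam) / lam) := by
  have hlam0 : 0 < lam := by linarith
  have hx_le_one (k : ℕ) : φ k ⬝ᵥ (regularizedGram lam φ k)⁻¹ *ᵥ φ k ≤ 1 :=
    (dotProduct_inv_regularizedGram_le hlam0 k).trans
      ((div_le_one hlam0).mpr ((hφ k).trans hlam))
  have hlogdet : Real.log (regularizedGram lam φ K).det ≤ Fintype.card n * Real.log (lam + K) := by
    rw [← Real.log_pow]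
    exact Real.log_le_log (posDef_regularizedGram φ hlam0 K).det_pos
      (det_regularizedGram_le hlam0 hφ K)
  calc ∑ k ∈ range K, φ k ⬝ᵥ (regularizedGram lam φ k)⁻¹ *ᵥ φ k
      ≤ ∑ k ∈ range K, 2 * Real.log (1 + φ k ⬝ᵥ (regularizedGram lam φ k)⁻¹ *ᵥ φ k) :=
        sum_le_sum fun k _ =>
          Real.le_two_mul_log_one_add (dotProduct_inv_regularizedGram_nonneg hlam0 k) (hx_le_one k)
    _ = 2 * (Real.log (regularizedGram lam φ K).det - Fintype.card n * Real.log lam) := by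
        rw [← mul_sum, sum_log_one_add_dotProduct_inv_regularizedGram hlam0,
          det_regularizedGram_zero, Real.log_pow]
    _ ≤ 2 * Fintype.card n * Real.log ((K + lam) / lam) := by
        rw [Real.log_div (by positivity) hlam0.ne', add_comm (K : ℝ)]
        linarith

end Potential

theorem Real.sum_sqrt_le_sqrt_card_mul_sum {ι : Type*} (s : Finset ι) {f : ι → ℝ}
    (hf : ∀ i ∈ s, 0 ≤ f i) : ∑ i ∈ s, √(f i) ≤ √(#s * ∑ i ∈ s, f i) := by
  refine Real.le_sqrt_of_sq_le ((sq_sum_le_card_mul_sum_sq ..).trans_eq ?_)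
  rw [sum_congr rfl fun i hi => Real.sq_sqrt (hf i hi)]

theorem sum_sqrt_bonus_bound (d K : ℕ) (lam : ℝ) (hlam : 1 ≤ lam)
    (φ : ℕ → Fin d → ℝ) (hφ : ∀ k, Real.sqrt (∑ i, φ k i ^ 2) ≤ 1)
    (Λ : ℕ → Matrix (Fin d) (Fin d) ℝ)
    (hΛ : ∀ k, Λ k = lam • (1 : Matrix (Fin d) (Fin d) ℝ) +
        ∑ τ ∈ Finset.range k, vecMulVec (φ τ) (φ τ)) :
    ∑ k ∈ Finset.range K, Real.sqrt (φ k ⬝ᵥ (Λ k)⁻¹ *ᵥ φ k) ≤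
      Real.sqrt (2 * d * K * Real.log ((K + lam) / lam)) := by
  obtain rfl : Λ = regularizedGram lam φ := funext hΛ
  have hφ_sq (k : ℕ) : φ k ⬝ᵥ φ k ≤ 1 := by
    simpa [dotProduct, sq] using Real.sqrt_le_one.mp (hφ k)
  have hpotential := sum_dotProduct_inv_regularizedGram_le hlam hφ_sq K
  rw [Fintype.card_fin] at hpotential
  calc ∑ k ∈ range K, √(φ k ⬝ᵥ (regularizedGram lam φ k)⁻¹ *ᵥ φ k)
      ≤ √(K * ∑ k ∈ range K, φ k ⬝ᵥ (regularizedGram lam φ k)⁻¹ *ᵥ φ k) := by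
        simpa using Real.sum_sqrt_le_sqrt_card_mul_sum (range K)
          fun k _ => dotProduct_inv_regularizedGram_nonneg (by linarith) k
    _ ≤ √(2 * d * K * Real.log ((K + lam) / lam)) :=
        Real.sqrt_le_sqrt ((mul_le_mul_of_nonneg_left hpotential K.cast_nonneg).trans_eq (by ring))
end
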